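/- For every temporal fair division instance with n = 2 agents, there exists an allocation A of M such that for every day t the induced allocation A_{M_t} is both EF1 and Pareto optimal with respect to the goods M_t, and A is EF1 up to each day. -/

import Mathlib

open Finset
open scoped Classical

noncomputable section

/-- Total value of a bundle `X` under additive valuation `v`. -/
def totalVal {G : Type*} (v : G → ℝ) (X : Finset G) : ℝ := ∑ g ∈ X, v g

/-- `A` is an allocation of the set of goods `S` among `n` agents. -/
def IsAlloc {G : Type*} (n : ℕ) (S : Finset G) (A : Fin n → Finset G) : Prop :=
  (∀ i j : Fin n, i ≠ j → Disjoint (A i) (A j)) ∧ Finset.univ.biUnion A = S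

/-- The allocation `A` is EF1 (envy-free up to one good). -/
def EF1 {G : Type*} [DecidableEq G] (n : ℕ) (v : Fin n → G → ℝ)
    (A : Fin n → Finset G) : Prop :=
  ∀ i j : Fin n, A j ≠ ∅ → ∃ g ∈ A j, totalVal (v i) ((A j).erase g) ≤ totalVal (v i) (A i)

/-- The allocation `A` of the goods `S` is Pareto optimal: no allocation of `S` makes
every agent weakly better off and some agent strictly better off. -/
def ParetoOpt {G : Type*} (n : ℕ) (v : Fin n → G → ℝ) (S : Finset G)
    (A : Fin n → Finset G) : Prop :=
  ¬ ∃ A' : Fin n → Finset G, IsAlloc n S A' ∧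
      (∀ i : Fin n, totalVal (v i) (A i) ≤ totalVal (v i) (A' i)) ∧
      (∃ i : Fin n, totalVal (v i) (A i) < totalVal (v i) (A' i))

/-- The union of the goods of the first days, up to and including day `t`. -/
def upTo {G : Type*} [DecidableEq G] {k : ℕ} (M : Fin k → Finset G) (t : Fin k) : Finset G :=
  (Finset.Iic t).biUnion M

set_option linter.unusedSectionVars false
set_option linter.unusedVariables false
set_option maxHeartbeats 1000000

namespace TFD

variable {G : Type*} [DecidableEq G]

lemma tv_union (v : G → ℝ) {X Y : Finset G} (h : Disjoint X Y) :
    totalVal v (X ∪ Y) = totalVal v X + totalVal v Y := Finset.sum_union h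

lemma tv_nonneg {v : G → ℝ} {X : Finset G} (h : ∀ g ∈ X, 0 ≤ v g) : 0 ≤ totalVal v X :=
  Finset.sum_nonneg h

lemma tv_sdiff (v : G → ℝ) {X S : Finset G} (h : X ⊆ S) :
    totalVal v (S \ X) = totalVal v S - totalVal v X := by
  have := Finset.sum_sdiff (f := v) h
  unfold totalVal; linarith [this]

lemma tv_erase (v : G → ℝ) {X : Finset G} {g : G} (h : g ∈ X) :
    totalVal v (X.erase g) = totalVal v X - v g := by
  have := Finset.sum_erase_add X v h
  unfold totalVal; linarith [this]

lemma tv_erase_le {v : G → ℝ} {X : Finset G} (g : G) (h : ∀ x ∈ X, 0 ≤ v x) :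
    totalVal v (X.erase g) ≤ totalVal v X := by
  apply Finset.sum_le_sum_of_subset_of_nonneg (Finset.erase_subset g X)
  intro i hi _; exact h i hi

/-- Agent with valuation `v` and bundle `own` does not envy bundle `opp` up to one good. -/
def EF1side (v : G → ℝ) (own opp : Finset G) : Prop :=
  totalVal v opp ≤ totalVal v own ∨ ∃ g ∈ opp, totalVal v (opp.erase g) ≤ totalVal v own

lemma ef1side_clause {v : G → ℝ} {own opp : Finset G} (h : EF1side v own opp)
    (hnn : ∀ g ∈ opp, 0 ≤ v g) (hne : opp ≠ ∅) :
    ∃ g ∈ opp, totalVal v (opp.erase g) ≤ totalVal v own := by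
  rcases h with h | h
  · obtain ⟨g, hg⟩ := Finset.nonempty_iff_ne_empty.mpr hne
    exact ⟨g, hg, le_trans (tv_erase_le g hnn) h⟩
  · exact h

lemma EF1side_append_pres (v : G → ℝ) {own opp B1' B0' : Finset G}
    (h : EF1side v own opp) (hdopp : Disjoint opp B0') (hdown : Disjoint own B1')
    (hday : totalVal v B0' ≤ totalVal v B1') :
    EF1side v (own ∪ B1') (opp ∪ B0') := by
  rcases h with h | ⟨g, hg, hle⟩
  · left
    rw [tv_union v hdopp, tv_union v hdown]; linarith
  · right
    refine ⟨g, Finset.mem_union_left _ hg, ?_⟩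
    have hgB : g ∉ B0' := fun hgB => (Finset.disjoint_left.mp hdopp) hg hgB
    rw [Finset.erase_union_distrib, Finset.erase_eq_of_notMem hgB,
      tv_union v (Finset.disjoint_of_subset_left (Finset.erase_subset _ _) hdopp),
      tv_union v hdown]
    linarith

lemma EF1side_append_fresh (v : G → ℝ) {own opp B1' B0' : Finset G}
    (h : totalVal v opp ≤ totalVal v own) (hday : EF1side v B1' B0')
    (hdopp : Disjoint opp B0') (hdown : Disjoint own B1') :
    EF1side v (own ∪ B1') (opp ∪ B0') := by
  rcases hday with hd | ⟨g, hg, hle⟩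
  · left
    rw [tv_union v hdopp, tv_union v hdown]; linarith
  · right
    refine ⟨g, Finset.mem_union_right _ hg, ?_⟩
    have hgopp : g ∉ opp := fun hgo => (Finset.disjoint_right.mp hdopp) hg hgo
    rw [Finset.erase_union_distrib, Finset.erase_eq_of_notMem hgopp,
      tv_union v (Finset.disjoint_of_subset_right (Finset.erase_subset _ _) hdopp),
      tv_union v hdown]
    linarith

/-- One-sided lex-argmax construction: among subsets `W ⊆ S` holding at least
half of agent `u`'s total value, lexicographically maximize the `w`-value of the
complement, then the `u`-value of `W`. -/
lemma oneSide (u w : G → ℝ) (S : Finset G)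
    (hu : ∀ g ∈ S, 0 ≤ u g) (hw : ∀ g ∈ S, 0 ≤ w g) :
    ∃ W : Finset G, W ⊆ S ∧
      totalVal u S ≤ 2 * totalVal u W ∧
      (∀ X ⊆ S, totalVal u S ≤ 2 * totalVal u X →
        totalVal w (S \ X) ≤ totalVal w (S \ W)) ∧
      (∀ X ⊆ S, totalVal u S ≤ 2 * totalVal u X →
        totalVal w (S \ W) ≤ totalVal w (S \ X) → totalVal u X ≤ totalVal u W) ∧
      EF1side w (S \ W) W := by
  classical
  set F : Finset (Finset G) := S.powerset.filter (fun X => totalVal u S ≤ 2 * totalVal u X)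
    with hF
  have hSF : S ∈ F := by
    simp only [hF, Finset.mem_filter, Finset.mem_powerset]
    refine ⟨le_rfl, ?_⟩
    have : 0 ≤ totalVal u S := tv_nonneg hu
    linarith
  obtain ⟨X₁, hX₁, hmax₁⟩ := F.exists_max_image (fun X => totalVal w (S \ X)) ⟨S, hSF⟩
  set F₂ : Finset (Finset G) :=
    F.filter (fun X => totalVal w (S \ X₁) ≤ totalVal w (S \ X)) with hF₂
  have hX₁F₂ : X₁ ∈ F₂ := by simp [hF₂, hX₁]
  obtain ⟨W, hWF₂, hmax₂⟩ := F₂.exists_max_image (fun X => totalVal u X) ⟨X₁, hX₁F₂⟩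
  have hWF : W ∈ F := (Finset.mem_filter.mp hWF₂).1
  have hWS : W ⊆ S := Finset.mem_powerset.mp (Finset.mem_filter.mp hWF).1
  have hWfeas : totalVal u S ≤ 2 * totalVal u W := (Finset.mem_filter.mp hWF).2
  have hprim : ∀ X ⊆ S, totalVal u S ≤ 2 * totalVal u X →
      totalVal w (S \ X) ≤ totalVal w (S \ W) := by
    intro X hXS hXfeas
    have hXF : X ∈ F := by simp [hF, Finset.mem_powerset, hXS, hXfeas]
    have h1 : totalVal w (S \ X) ≤ totalVal w (S \ X₁) := hmax₁ X hXF
    have h2 : totalVal w (S \ X₁) ≤ totalVal w (S \ W) := (Finset.mem_filter.mp hWF₂).2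
    linarith
  have htie : ∀ X ⊆ S, totalVal u S ≤ 2 * totalVal u X →
      totalVal w (S \ W) ≤ totalVal w (S \ X) → totalVal u X ≤ totalVal u W := by
    intro X hXS hXfeas hge
    have hXF : X ∈ F := by simp [hF, Finset.mem_powerset, hXS, hXfeas]
    have hXF₂ : X ∈ F₂ := by
      simp only [hF₂, Finset.mem_filter]
      exact ⟨hXF, le_trans ((Finset.mem_filter.mp hWF₂).2) hge⟩
    exact hmax₂ X hXF₂
  refine ⟨W, hWS, hWfeas, hprim, htie, ?_⟩
  by_cases hpos : ∃ h ∈ W, 0 < w h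
  · obtain ⟨h, hhW, hwh⟩ := hpos
    have hhS : h ∈ S := hWS hhW
    have hinfeas : ¬ (totalVal u S ≤ 2 * totalVal u (W.erase h)) := by
      intro hfe
      have hsub : W.erase h ⊆ S := (Finset.erase_subset h W).trans hWS
      have hset : S \ (W.erase h) = insert h (S \ W) := by
        ext x
        simp only [Finset.mem_sdiff, Finset.mem_erase, Finset.mem_insert, not_and, not_not]
        constructor
        · rintro ⟨hxS, hx⟩
          by_cases hxW : x ∈ W
          · left; by_contra hne; exact (hx (fun hh => hne hh) : x ∉ W) hxW
          · right; exact ⟨hxS, hxW⟩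
        · rintro (rfl | ⟨hxS, hxW⟩)
          · exact ⟨hhS, fun hne => absurd rfl hne⟩
          · exact ⟨hxS, fun _ => hxW⟩
      have := hprim (W.erase h) hsub hfe
      rw [hset] at this
      have hins : totalVal w (insert h (S \ W)) = w h + totalVal w (S \ W) := by
        unfold totalVal
        rw [Finset.sum_insert (by simp [Finset.mem_sdiff, hhW])]
      linarith
    push_neg at hinfeas
    set X' : Finset G := insert h (S \ W) with hX'
    have hX'S : X' ⊆ S := by
      intro x hx
      rcases Finset.mem_insert.mp hx with rfl | hx
      · exact hhS
      · exact (Finset.mem_sdiff.mp hx).1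
    have hX'val : totalVal u X' = u h + (totalVal u S - totalVal u W) := by
      rw [hX']
      unfold totalVal
      rw [Finset.sum_insert (by simp [Finset.mem_sdiff, hhW])]
      have := tv_sdiff u hWS
      unfold totalVal at this
      rw [this]
    have herase : totalVal u (W.erase h) = totalVal u W - u h := tv_erase u hhW
    have hX'feas : totalVal u S ≤ 2 * totalVal u X' := by
      rw [hX'val]; linarith
    have hset2 : S \ X' = W.erase h := by
      ext x
      simp only [hX', Finset.mem_sdiff, Finset.mem_insert, Finset.mem_erase, not_or, not_and,
        not_not]
      constructor
      · rintro ⟨hxS, hne, hx⟩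
        exact ⟨hne, hx hxS⟩
      · rintro ⟨hne, hxW⟩
        exact ⟨hWS hxW, hne, fun _ => hxW⟩
    have := hprim X' hX'S hX'feas
    rw [hset2] at this
    exact Or.inr ⟨h, hhW, this⟩
  · push_neg at hpos
    left
    have h0 : totalVal w W = 0 := by
      apply le_antisymm
      · apply Finset.sum_nonpos; intro i hi; exact hpos i hi
      · exact tv_nonneg (fun g hg => hw g (hWS hg))
    rw [h0]
    exact tv_nonneg (fun g hg => hw g ((Finset.sdiff_subset).trans (le_refl _) hg))

/-- Day lemma: the two canonical EF1+PO allocations `L` (favoring agent 0) and `R`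
(favoring agent 1), together with the cross relations.  `L0`, `R0` are agent 0's bundles. -/
lemma dayPair (v0 v1 : G → ℝ) (S : Finset G)
    (h0 : ∀ g ∈ S, 0 ≤ v0 g) (h1 : ∀ g ∈ S, 0 ≤ v1 g) :
    ∃ L0 R0 : Finset G, L0 ⊆ S ∧ R0 ⊆ S ∧
      totalVal v0 (S \ L0) ≤ totalVal v0 L0 ∧
      EF1side v1 (S \ L0) L0 ∧
      (∀ X ⊆ S, totalVal v0 L0 ≤ totalVal v0 X →
        totalVal v1 (S \ L0) ≤ totalVal v1 (S \ X) →
        totalVal v0 X ≤ totalVal v0 L0 ∧ totalVal v1 (S \ X) ≤ totalVal v1 (S \ L0)) ∧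
      totalVal v1 R0 ≤ totalVal v1 (S \ R0) ∧
      EF1side v0 R0 (S \ R0) ∧
      (∀ X ⊆ S, totalVal v0 R0 ≤ totalVal v0 X →
        totalVal v1 (S \ R0) ≤ totalVal v1 (S \ X) →
        totalVal v0 X ≤ totalVal v0 R0 ∧ totalVal v1 (S \ X) ≤ totalVal v1 (S \ R0)) ∧
      totalVal v0 (S \ R0) ≤ totalVal v0 L0 ∧
      totalVal v1 L0 ≤ totalVal v1 (S \ R0) := by
  classical
  obtain ⟨L0, hLS, hLfeas, hLprim, hLtie, hLef⟩ := oneSide v0 v1 S h0 h1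
  obtain ⟨R1, hR1S, hRfeas, hRprim, hRtie, hRef⟩ := oneSide v1 v0 S h1 h0
  set R0 : Finset G := S \ R1 with hR0
  have hR0S : R0 ⊆ S := Finset.sdiff_subset
  have hR1eq : S \ R0 = R1 := Finset.sdiff_sdiff_eq_self hR1S
  have htvL : totalVal v0 (S \ L0) = totalVal v0 S - totalVal v0 L0 := tv_sdiff v0 hLS
  have htvL1 : totalVal v1 (S \ L0) = totalVal v1 S - totalVal v1 L0 := tv_sdiff v1 hLS
  have htvR : totalVal v1 R0 = totalVal v1 S - totalVal v1 R1 := by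
    rw [hR0]; exact tv_sdiff v1 hR1S
  have htvR0 : totalVal v0 R0 = totalVal v0 S - totalVal v0 R1 := by
    rw [hR0]; exact tv_sdiff v0 hR1S
  have claim1 : totalVal v0 R1 ≤ totalVal v0 L0 := by
    by_cases hc : totalVal v1 S ≤ 2 * totalVal v1 (S \ L0)
    · have := hRprim (S \ L0) Finset.sdiff_subset hc
      rw [Finset.sdiff_sdiff_eq_self hLS] at this
      have h2 : totalVal v0 (S \ R1) = totalVal v0 S - totalVal v0 R1 := tv_sdiff v0 hR1S
      linarith
    · push_neg at hc
      have hfeas : totalVal v1 S ≤ 2 * totalVal v1 L0 := by linarith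
      have := hRprim L0 hLS hfeas
      have h2 : totalVal v0 (S \ R1) = totalVal v0 S - totalVal v0 R1 := tv_sdiff v0 hR1S
      linarith
  have claim2 : totalVal v1 L0 ≤ totalVal v1 R1 := by
    by_cases hc : totalVal v0 S ≤ 2 * totalVal v0 (S \ R1)
    · have := hLprim (S \ R1) Finset.sdiff_subset hc
      rw [Finset.sdiff_sdiff_eq_self hR1S] at this
      have h2 : totalVal v1 (S \ R1) = totalVal v1 S - totalVal v1 R1 := tv_sdiff v1 hR1S
      linarith
    · push_neg at hc
      have hR1v0 : totalVal v0 (S \ R1) = totalVal v0 S - totalVal v0 R1 := tv_sdiff v0 hR1S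
      have hfeas : totalVal v0 S ≤ 2 * totalVal v0 R1 := by linarith
      have := hLprim R1 hR1S hfeas
      have h2 : totalVal v1 (S \ R1) = totalVal v1 S - totalVal v1 R1 := tv_sdiff v1 hR1S
      linarith
  refine ⟨L0, R0, hLS, hR0S, by linarith, hLef, ?_, by rw [hR1eq]; linarith, ?_, ?_, ?_, ?_⟩
  · intro X hXS hle0 hle1
    have hXfeas : totalVal v0 S ≤ 2 * totalVal v0 X := by linarith
    have p1 := hLprim X hXS hXfeas
    have p2 := hLtie X hXS hXfeas hle1
    exact ⟨p2, p1⟩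
  · rw [hR1eq]; exact hRef
  · intro X hXS hle0 hle1
    rw [hR1eq] at hle1 ⊢
    have hYS : S \ X ⊆ S := Finset.sdiff_subset
    have htvX : totalVal v0 (S \ X) = totalVal v0 S - totalVal v0 X := tv_sdiff v0 hXS
    have htvX1 : totalVal v1 (S \ X) = totalVal v1 S - totalVal v1 X := tv_sdiff v1 hXS
    have htvR1' : totalVal v1 R1 = totalVal v1 S - totalVal v1 (S \ R1) := by
      have := tv_sdiff v1 hR1S; linarith
    have hYfeas : totalVal v1 S ≤ 2 * totalVal v1 (S \ X) := by linarith
    have p1 := hRprim (S \ X) hYS hYfeas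
    rw [Finset.sdiff_sdiff_eq_self hXS] at p1
    have harg : totalVal v0 (S \ R1) ≤ totalVal v0 (S \ (S \ X)) := by
      rw [Finset.sdiff_sdiff_eq_self hXS, ← hR0]; exact hle0
    have p2 := hRtie (S \ X) hYS hYfeas harg
    constructor
    · rw [hR0]; exact p1
    · exact p2
  · rw [hR1eq] at *; linarith [claim1]
  · rw [hR1eq]; exact claim2

variable (v0 v1 : G → ℝ)

def dayNonneg (S : Finset G) : Prop := (∀ g ∈ S, 0 ≤ v0 g) ∧ (∀ g ∈ S, 0 ≤ v1 g)

def LW (S : Finset G) : Finset G :=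
  if h : dayNonneg v0 v1 S then (dayPair v0 v1 S h.1 h.2).choose else ∅

def RW (S : Finset G) : Finset G :=
  if h : dayNonneg v0 v1 S then (dayPair v0 v1 S h.1 h.2).choose_spec.choose else ∅

lemma LWRW_spec {S : Finset G} (h : dayNonneg v0 v1 S) :
    LW v0 v1 S ⊆ S ∧ RW v0 v1 S ⊆ S ∧
      totalVal v0 (S \ LW v0 v1 S) ≤ totalVal v0 (LW v0 v1 S) ∧
      EF1side v1 (S \ LW v0 v1 S) (LW v0 v1 S) ∧
      (∀ X ⊆ S, totalVal v0 (LW v0 v1 S) ≤ totalVal v0 X →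
        totalVal v1 (S \ LW v0 v1 S) ≤ totalVal v1 (S \ X) →
        totalVal v0 X ≤ totalVal v0 (LW v0 v1 S) ∧
        totalVal v1 (S \ X) ≤ totalVal v1 (S \ LW v0 v1 S)) ∧
      totalVal v1 (RW v0 v1 S) ≤ totalVal v1 (S \ RW v0 v1 S) ∧
      EF1side v0 (RW v0 v1 S) (S \ RW v0 v1 S) ∧
      (∀ X ⊆ S, totalVal v0 (RW v0 v1 S) ≤ totalVal v0 X →
        totalVal v1 (S \ RW v0 v1 S) ≤ totalVal v1 (S \ X) →
        totalVal v0 X ≤ totalVal v0 (RW v0 v1 S) ∧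
        totalVal v1 (S \ X) ≤ totalVal v1 (S \ RW v0 v1 S)) ∧
      totalVal v0 (S \ RW v0 v1 S) ≤ totalVal v0 (LW v0 v1 S) ∧
      totalVal v1 (LW v0 v1 S) ≤ totalVal v1 (S \ RW v0 v1 S) := by
  have h' := (dayPair v0 v1 S h.1 h.2).choose_spec.choose_spec
  rw [LW, RW, dif_pos h, dif_pos h]
  exact h'

/-- The chosen per-day allocation is one of the two canonical ones. -/
def DayChoice (S B0 B1 : Finset G) : Prop :=
  (B0 = LW v0 v1 S ∧ B1 = S \ LW v0 v1 S) ∨ (B0 = RW v0 v1 S ∧ B1 = S \ RW v0 v1 S)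

lemma DayChoice_parts {S B0 B1 : Finset G} (hnn : dayNonneg v0 v1 S)
    (hc : DayChoice v0 v1 S B0 B1) :
    B0 ⊆ S ∧ B1 ⊆ S ∧ B0 ∪ B1 = S ∧ Disjoint B0 B1 := by
  have hspec := LWRW_spec v0 v1 hnn
  have : ∃ W ⊆ S, B0 = W ∧ B1 = S \ W := by
    rcases hc with ⟨h0, h1⟩ | ⟨h0, h1⟩
    exacts [⟨_, hspec.1, h0, h1⟩, ⟨_, hspec.2.1, h0, h1⟩]
  obtain ⟨W, hWS, rfl, rfl⟩ := this
  exact ⟨hWS, Finset.sdiff_subset, Finset.union_sdiff_of_subset hWS, Finset.disjoint_sdiff⟩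

lemma DayChoice_day {S B0 B1 : Finset G} (hnn : dayNonneg v0 v1 S)
    (hc : DayChoice v0 v1 S B0 B1) :
    B0 ⊆ S ∧ B1 = S \ B0 ∧ EF1side v0 B0 B1 ∧ EF1side v1 B1 B0 ∧
    (∀ X ⊆ S, totalVal v0 B0 ≤ totalVal v0 X →
      totalVal v1 B1 ≤ totalVal v1 (S \ X) →
      totalVal v0 X ≤ totalVal v0 B0 ∧ totalVal v1 (S \ X) ≤ totalVal v1 B1) := by
  obtain ⟨hLS, hRS, dpL0, dpL1, dpLPO, dpR1, dpR0, dpRPO, rel0, rel1⟩ := LWRW_spec v0 v1 hnn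
  rcases hc with ⟨rfl, rfl⟩ | ⟨rfl, rfl⟩
  · exact ⟨hLS, rfl, Or.inl dpL0, dpL1, dpLPO⟩
  · exact ⟨hRS, rfl, dpR0, Or.inl dpR1, dpRPO⟩


variable {k : ℕ} (M : Fin k → Finset G)

def Surv : ℕ → Finset G → Finset G → Prop := fun t₀ X0 X1 =>
  if h : t₀ < k then
    ∃ B0 B1 : Finset G, DayChoice v0 v1 (M ⟨t₀, h⟩) B0 B1 ∧
      EF1side v0 (X0 ∪ B0) (X1 ∪ B1) ∧ EF1side v1 (X1 ∪ B1) (X0 ∪ B0) ∧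
      Surv (t₀ + 1) (X0 ∪ B0) (X1 ∪ B1)
  else True
termination_by t₀ => k - t₀
decreasing_by omega

lemma Surv_of_ge {t₀ : ℕ} (h : ¬ t₀ < k) (X0 X1 : Finset G) : Surv v0 v1 M t₀ X0 X1 := by
  rw [Surv, dif_neg h]; trivial

lemma Surv_of_lt {t₀ : ℕ} (h : t₀ < k) (X0 X1 B0 B1 : Finset G)
    (hc : DayChoice v0 v1 (M ⟨t₀, h⟩) B0 B1)
    (h0 : EF1side v0 (X0 ∪ B0) (X1 ∪ B1)) (h1 : EF1side v1 (X1 ∪ B1) (X0 ∪ B0))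
    (hs : Surv v0 v1 M (t₀ + 1) (X0 ∪ B0) (X1 ∪ B1)) : Surv v0 v1 M t₀ X0 X1 := by
  rw [Surv, dif_pos h]
  exact ⟨B0, B1, hc, h0, h1, hs⟩

def Inside (t₀ : ℕ) (X : Finset G) : Prop :=
  X ⊆ Finset.univ.biUnion M ∧ ∀ s : Fin k, t₀ ≤ s.val → Disjoint X (M s)

lemma mainInd
    (hdisj : ∀ t t' : Fin k, t ≠ t' → Disjoint (M t) (M t'))
    (hv0 : ∀ g ∈ Finset.univ.biUnion M, 0 ≤ v0 g)
    (hv1 : ∀ g ∈ Finset.univ.biUnion M, 0 ≤ v1 g) :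
    ∀ n t₀ : ℕ, k - t₀ = n →
    (∀ X0 X1, Inside M t₀ X0 → Inside M t₀ X1 →
      totalVal v0 X1 ≤ totalVal v0 X0 → totalVal v1 X0 ≤ totalVal v1 X1 →
      Surv v0 v1 M t₀ X0 X1) ∧
    (∀ P0 P1 Q0 Q1, Inside M t₀ P0 → Inside M t₀ P1 → Inside M t₀ Q0 → Inside M t₀ Q1 →
      totalVal v0 P1 ≤ totalVal v0 P0 →
      totalVal v1 Q0 ≤ totalVal v1 Q1 →
      totalVal v0 P1 + totalVal v0 Q1 ≤ totalVal v0 P0 + totalVal v0 Q0 →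
      totalVal v1 P0 + totalVal v1 Q0 ≤ totalVal v1 P1 + totalVal v1 Q1 →
      EF1side v1 P1 P0 → EF1side v0 Q0 Q1 →
      Surv v0 v1 M t₀ P0 P1 ∨ Surv v0 v1 M t₀ Q0 Q1) := by
  intro n
  induction n with
  | zero =>
    intro t₀ ht₀
    have h : ¬ t₀ < k := by omega
    exact ⟨fun X0 X1 _ _ _ _ => Surv_of_ge v0 v1 M h X0 X1,
      fun P0 P1 Q0 Q1 _ _ _ _ _ _ _ _ _ _ => Or.inl (Surv_of_ge v0 v1 M h P0 P1)⟩
  | succ n ih =>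
    intro t₀ ht₀
    have h : t₀ < k := by omega
    have ih' := ih (t₀ + 1) (by omega)
    set tf : Fin k := ⟨t₀, h⟩ with htf
    set S : Finset G := M tf with hSdef
    have hSsub : S ⊆ Finset.univ.biUnion M := by
      intro g hg
      exact Finset.mem_biUnion.mpr ⟨tf, Finset.mem_univ _, hg⟩
    have hSnn : dayNonneg v0 v1 S :=
      ⟨fun g hg => hv0 g (hSsub hg), fun g hg => hv1 g (hSsub hg)⟩
    obtain ⟨hLS, hRS, dpL0, dpL1, dpLPO, dpR1, dpR0, dpRPO, rel0, rel1⟩ := LWRW_spec v0 v1 hSnn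
    set L0 : Finset G := LW v0 v1 S with hL0def
    set R0 : Finset G := RW v0 v1 S with hR0def
    set L1 : Finset G := S \ L0 with hL1def
    set R1 : Finset G := S \ R0 with hR1def
    have hL1S : L1 ⊆ S := Finset.sdiff_subset
    have hR1S : R1 ⊆ S := Finset.sdiff_subset
    -- value identities
    have idL0 : totalVal v0 L1 = totalVal v0 S - totalVal v0 L0 := tv_sdiff v0 hLS
    have idL1 : totalVal v1 L1 = totalVal v1 S - totalVal v1 L0 := tv_sdiff v1 hLS
    have idR0 : totalVal v0 R1 = totalVal v0 S - totalVal v0 R0 := tv_sdiff v0 hRS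
    have idR1 : totalVal v1 R1 = totalVal v1 S - totalVal v1 R0 := tv_sdiff v1 hRS
    -- Inside helpers
    have hInDay : ∀ X, Inside M t₀ X → ∀ B ⊆ S, Disjoint X B := by
      intro X hX B hB
      exact Finset.disjoint_of_subset_right hB (hX.2 tf (le_refl _))
    have hInStep : ∀ X, Inside M t₀ X → ∀ B ⊆ S, Inside M (t₀ + 1) (X ∪ B) := by
      intro X hX B hB
      constructor
      · exact Finset.union_subset hX.1 (hB.trans hSsub)
      · intro s hs
        have h1 : Disjoint X (M s) := hX.2 s (by omega)
        have h2 : Disjoint B (M s) := by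
          refine Finset.disjoint_of_subset_left hB (hdisj tf s ?_)
          intro hEq
          rw [hEq] at htf
          have : s.val = t₀ := by rw [htf]
          omega
        exact Finset.disjoint_union_left.mpr ⟨h1, h2⟩
    have hDCL : DayChoice v0 v1 S L0 L1 := Or.inl ⟨rfl, rfl⟩
    have hDCR : DayChoice v0 v1 S R0 R1 := Or.inr ⟨rfl, rfl⟩
    constructor
    · -- H1
      intro X0 X1 hX0 hX1 hE0 hE1
      have d00 : Disjoint X0 L0 := hInDay X0 hX0 L0 hLS
      have d01 : Disjoint X1 L1 := hInDay X1 hX1 L1 hL1S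
      have d01' : Disjoint X1 L0 := hInDay X1 hX1 L0 hLS
      have d00' : Disjoint X0 L1 := hInDay X0 hX0 L1 hL1S
      have dR00 : Disjoint X0 R0 := hInDay X0 hX0 R0 hRS
      have dR11 : Disjoint X1 R1 := hInDay X1 hX1 R1 hR1S
      have dR01 : Disjoint X1 R0 := hInDay X1 hX1 R0 hRS
      have dR10 : Disjoint X0 R1 := hInDay X0 hX0 R1 hR1S
      have s1 : totalVal v0 (X0 ∪ L0) = totalVal v0 X0 + totalVal v0 L0 := tv_union v0 d00
      have s2 : totalVal v0 (X1 ∪ L1) = totalVal v0 X1 + totalVal v0 L1 := tv_union v0 d01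
      have s3 : totalVal v1 (X0 ∪ L0) = totalVal v1 X0 + totalVal v1 L0 := tv_union v1 d00
      have s4 : totalVal v1 (X1 ∪ L1) = totalVal v1 X1 + totalVal v1 L1 := tv_union v1 d01
      have s5 : totalVal v0 (X0 ∪ R0) = totalVal v0 X0 + totalVal v0 R0 := tv_union v0 dR00
      have s6 : totalVal v0 (X1 ∪ R1) = totalVal v0 X1 + totalVal v0 R1 := tv_union v0 dR11
      have s7 : totalVal v1 (X0 ∪ R0) = totalVal v1 X0 + totalVal v1 R0 := tv_union v1 dR00
      have s8 : totalVal v1 (X1 ∪ R1) = totalVal v1 X1 + totalVal v1 R1 := tv_union v1 dR11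
      by_cases c1 : totalVal v1 (X0 ∪ L0) ≤ totalVal v1 (X1 ∪ L1)
      · -- choose L, both ≤ 0
        refine Surv_of_lt v0 v1 M h X0 X1 L0 L1 hDCL (Or.inl ?_) (Or.inl c1) ?_
        · rw [s1, s2]; linarith
        · exact (ih'.1) (X0 ∪ L0) (X1 ∪ L1) (hInStep X0 hX0 L0 hLS) (hInStep X1 hX1 L1 hL1S)
            (by rw [s1, s2]; linarith) c1
      · by_cases c2 : totalVal v0 (X1 ∪ R1) ≤ totalVal v0 (X0 ∪ R0)
        · refine Surv_of_lt v0 v1 M h X0 X1 R0 R1 hDCR (Or.inl c2) (Or.inl ?_) ?_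
          · rw [s7, s8]; linarith
          · exact (ih'.1) (X0 ∪ R0) (X1 ∪ R1) (hInStep X0 hX0 R0 hRS) (hInStep X1 hX1 R1 hR1S)
              c2 (by rw [s7, s8]; linarith)
        · -- split: PAIR at t₀+1 with P = X∪L, Q = X∪R
          push_neg at c1 c2
          have ef1P : EF1side v1 (X1 ∪ L1) (X0 ∪ L0) :=
            EF1side_append_fresh v1 hE1 dpL1 d00 d01
          have ef0Q : EF1side v0 (X0 ∪ R0) (X1 ∪ R1) :=
            EF1side_append_fresh v0 hE0 dpR0 dR11 dR00
          have hpair := (ih'.2) (X0 ∪ L0) (X1 ∪ L1) (X0 ∪ R0) (X1 ∪ R1)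
            (hInStep X0 hX0 L0 hLS) (hInStep X1 hX1 L1 hL1S)
            (hInStep X0 hX0 R0 hRS) (hInStep X1 hX1 R1 hR1S)
            (by rw [s1, s2]; linarith)
            (by rw [s7, s8]; linarith)
            (by rw [s1, s2, s5, s6]; linarith)
            (by rw [s3, s4, s7, s8]; linarith)
            ef1P ef0Q
          rcases hpair with hp | hq
          · exact Surv_of_lt v0 v1 M h X0 X1 L0 L1 hDCL
              (Or.inl (by rw [s1, s2]; linarith)) ef1P hp
          · exact Surv_of_lt v0 v1 M h X0 X1 R0 R1 hDCR
              ef0Q (Or.inl (by rw [s7, s8]; linarith)) hq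
    · -- PAIR
      intro P0 P1 Q0 Q1 hP0 hP1 hQ0 hQ1 hE0P hE1Q hsum0 hsum1 hef1P hef0Q
      have dPR00 : Disjoint P0 R0 := hInDay P0 hP0 R0 hRS
      have dPR11 : Disjoint P1 R1 := hInDay P1 hP1 R1 hR1S
      have dPR10 : Disjoint P1 R0 := hInDay P1 hP1 R0 hRS
      have dPR01 : Disjoint P0 R1 := hInDay P0 hP0 R1 hR1S
      have dQL00 : Disjoint Q0 L0 := hInDay Q0 hQ0 L0 hLS
      have dQL11 : Disjoint Q1 L1 := hInDay Q1 hQ1 L1 hL1S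
      have dQL10 : Disjoint Q1 L0 := hInDay Q1 hQ1 L0 hLS
      have dQL01 : Disjoint Q0 L1 := hInDay Q0 hQ0 L1 hL1S
      have t1' : totalVal v0 (P0 ∪ R0) = totalVal v0 P0 + totalVal v0 R0 := tv_union v0 dPR00
      have t2 : totalVal v0 (P1 ∪ R1) = totalVal v0 P1 + totalVal v0 R1 := tv_union v0 dPR11
      have t3 : totalVal v1 (P0 ∪ R0) = totalVal v1 P0 + totalVal v1 R0 := tv_union v1 dPR00
      have t4 : totalVal v1 (P1 ∪ R1) = totalVal v1 P1 + totalVal v1 R1 := tv_union v1 dPR11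
      have t5 : totalVal v0 (Q0 ∪ L0) = totalVal v0 Q0 + totalVal v0 L0 := tv_union v0 dQL00
      have t6 : totalVal v0 (Q1 ∪ L1) = totalVal v0 Q1 + totalVal v0 L1 := tv_union v0 dQL11
      have t7 : totalVal v1 (Q0 ∪ L0) = totalVal v1 Q0 + totalVal v1 L0 := tv_union v1 dQL00
      have t8 : totalVal v1 (Q1 ∪ L1) = totalVal v1 Q1 + totalVal v1 L1 := tv_union v1 dQL11
      -- preserved / fresh EF1 sides
      have ef1PR : EF1side v1 (P1 ∪ R1) (P0 ∪ R0) :=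
        EF1side_append_pres v1 hef1P dPR00 dPR11 dpR1
      have ef0QL : EF1side v0 (Q0 ∪ L0) (Q1 ∪ L1) :=
        EF1side_append_pres v0 hef0Q dQL11 dQL00 dpL0
      have ef1QL : EF1side v1 (Q1 ∪ L1) (Q0 ∪ L0) :=
        EF1side_append_fresh v1 hE1Q dpL1 dQL00 dQL11
      have ef0PR : EF1side v0 (P0 ∪ R0) (P1 ∪ R1) :=
        EF1side_append_fresh v0 hE0P dpR0 dPR11 dPR00
      have insPR0 := hInStep P0 hP0 R0 hRS
      have insPR1 := hInStep P1 hP1 R1 hR1S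
      have insQL0 := hInStep Q0 hQ0 L0 hLS
      have insQL1 := hInStep Q1 hQ1 L1 hL1S
      by_cases cq : totalVal v1 (P0 ∪ R0) ≤ totalVal v1 (P1 ∪ R1)
      · by_cases cu : totalVal v0 (P1 ∪ R1) ≤ totalVal v0 (P0 ∪ R0)
        · -- case 1 : P plays R, both ≤ 0
          left
          exact Surv_of_lt v0 v1 M h P0 P1 R0 R1 hDCR (Or.inl cu) (Or.inl cq)
            ((ih'.1) _ _ insPR0 insPR1 cu cq)
        · push_neg at cu
          -- key1 : u > 0 ⇒ p' ≤ 0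
          have cp : totalVal v0 (Q0 ∪ L0) ≥ totalVal v0 (Q1 ∪ L1) := by
            linarith [t1', t2, t5, t6, idL0, idR0, rel0, hsum0, cu]
          by_cases cw : totalVal v1 (Q0 ∪ L0) ≤ totalVal v1 (Q1 ∪ L1)
          · -- case 2 : Q plays L, both ≤ 0
            right
            exact Surv_of_lt v0 v1 M h Q0 Q1 L0 L1 hDCL (Or.inl cp) (Or.inl cw)
              ((ih'.1) _ _ insQL0 insQL1 cp cw)
          · -- case 4 : swapped pair (Q·L as agent1-positive side, P·R as agent0-positive side)
            push_neg at cw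
            have hpair := (ih'.2) (Q0 ∪ L0) (Q1 ∪ L1) (P0 ∪ R0) (P1 ∪ R1)
              insQL0 insQL1 insPR0 insPR1
              cp cq
              (by linarith [t1', t2, t5, t6, idL0, idR0, rel0, hsum0])
              (by linarith [t3, t4, t7, t8, idL1, idR1, rel1, hsum1])
              ef1QL ef0PR
            rcases hpair with hq | hp
            · right
              exact Surv_of_lt v0 v1 M h Q0 Q1 L0 L1 hDCL (Or.inl cp) ef1QL hq
            · left
              exact Surv_of_lt v0 v1 M h P0 P1 R0 R1 hDCR ef0PR (Or.inl cq) hp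
      · push_neg at cq
        -- key2 : q' > 0 ⇒ w ≤ 0
        have cw : totalVal v1 (Q0 ∪ L0) ≤ totalVal v1 (Q1 ∪ L1) := by
          linarith [t3, t4, t7, t8, idL1, idR1, rel1, hsum1, cq]
        by_cases cp : totalVal v0 (Q1 ∪ L1) ≤ totalVal v0 (Q0 ∪ L0)
        · -- is p' ≤ 0 : case 2
          right
          exact Surv_of_lt v0 v1 M h Q0 Q1 L0 L1 hDCL (Or.inl cp) (Or.inl cw)
            ((ih'.1) _ _ insQL0 insQL1 cp cw)
        · -- case 3 : p' > 0, hence u ≤ 0; standard pair (P·R, Q·L)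
          push_neg at cp
          have cu : totalVal v0 (P1 ∪ R1) ≤ totalVal v0 (P0 ∪ R0) := by
            linarith [t1', t2, t5, t6, idL0, idR0, rel0, hsum0, cp]
          have hpair := (ih'.2) (P0 ∪ R0) (P1 ∪ R1) (Q0 ∪ L0) (Q1 ∪ L1)
            insPR0 insPR1 insQL0 insQL1
            cu cw
            (by linarith [t1', t2, t5, t6, idL0, idR0, rel0, hsum0])
            (by linarith [t3, t4, t7, t8, idL1, idR1, rel1, hsum1])
            ef1PR ef0QL
          rcases hpair with hp | hq
          · left
            exact Surv_of_lt v0 v1 M h P0 P1 R0 R1 hDCR (Or.inl cu) ef1PR hp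
          · right
            exact Surv_of_lt v0 v1 M h Q0 Q1 L0 L1 hDCL ef0QL (Or.inl cw) hq


lemma Surv_elim {t₀ : ℕ} (h : t₀ < k) {X0 X1 : Finset G} (hs : Surv v0 v1 M t₀ X0 X1) :
    ∃ B0 B1 : Finset G, DayChoice v0 v1 (M ⟨t₀, h⟩) B0 B1 ∧
      EF1side v0 (X0 ∪ B0) (X1 ∪ B1) ∧ EF1side v1 (X1 ∪ B1) (X0 ∪ B0) ∧
      Surv v0 v1 M (t₀ + 1) (X0 ∪ B0) (X1 ∪ B1) := by
  rw [Surv, dif_pos h] at hs; exact hs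


def suffU (t₀ : ℕ) : Finset G :=
  (Finset.univ.filter (fun s : Fin k => t₀ ≤ s.val)).biUnion M

def midU (t₀ : ℕ) (t : Fin k) : Finset G :=
  (Finset.univ.filter (fun s : Fin k => t₀ ≤ s.val ∧ s.val ≤ t.val)).biUnion M

lemma mem_suffU {t₀ : ℕ} {g : G} : g ∈ suffU M t₀ ↔ ∃ s : Fin k, t₀ ≤ s.val ∧ g ∈ M s := by
  simp [suffU]

lemma mem_midU {t₀ : ℕ} {t : Fin k} {g : G} :
    g ∈ midU M t₀ t ↔ ∃ s : Fin k, (t₀ ≤ s.val ∧ s.val ≤ t.val) ∧ g ∈ M s := by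
  simp [midU]

lemma extract
    (hdisj : ∀ t t' : Fin k, t ≠ t' → Disjoint (M t) (M t'))
    (hv0 : ∀ g ∈ Finset.univ.biUnion M, 0 ≤ v0 g)
    (hv1 : ∀ g ∈ Finset.univ.biUnion M, 0 ≤ v1 g) :
    ∀ n t₀ : ℕ, k - t₀ = n → ∀ X0 X1 : Finset G, Surv v0 v1 M t₀ X0 X1 →
    (∀ s : Fin k, t₀ ≤ s.val → Disjoint X0 (M s)) →
    (∀ s : Fin k, t₀ ≤ s.val → Disjoint X1 (M s)) →
    ∃ C0 C1 : Finset G,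
      C0 ∪ C1 = suffU M t₀ ∧ Disjoint C0 C1 ∧
      (∀ t : Fin k, t₀ ≤ t.val → DayChoice v0 v1 (M t) (C0 ∩ M t) (C1 ∩ M t)) ∧
      (∀ t : Fin k, t₀ ≤ t.val →
        EF1side v0 (X0 ∪ (C0 ∩ midU M t₀ t)) (X1 ∪ (C1 ∩ midU M t₀ t)) ∧
        EF1side v1 (X1 ∪ (C1 ∩ midU M t₀ t)) (X0 ∪ (C0 ∩ midU M t₀ t))) := by
  intro n
  induction n with
  | zero =>
    intro t₀ ht₀ X0 X1 _ _ _
    refine ⟨∅, ∅, ?_, Finset.disjoint_empty_left _, ?_, ?_⟩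
    · rw [Finset.empty_union]
      ext g
      simp only [mem_suffU M, Finset.notMem_empty, false_iff, not_exists, not_and]
      intro s hs
      exact absurd (s.isLt) (by omega)
    · intro t ht; exact absurd t.isLt (by omega)
    · intro t ht; exact absurd t.isLt (by omega)
  | succ n ih =>
    intro t₀ ht₀ X0 X1 hs hX0 hX1
    have h : t₀ < k := by omega
    set tf : Fin k := ⟨t₀, h⟩ with htf
    have htv : (tf : Fin k).val = t₀ := rfl
    have hSsub : M tf ⊆ Finset.univ.biUnion M := fun g hg =>
      Finset.mem_biUnion.mpr ⟨tf, Finset.mem_univ _, hg⟩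
    have hSnn : dayNonneg v0 v1 (M tf) :=
      ⟨fun g hg => hv0 g (hSsub hg), fun g hg => hv1 g (hSsub hg)⟩
    obtain ⟨B0, B1, hDC, e0, e1, hs'⟩ := Surv_elim v0 v1 M h hs
    obtain ⟨hB0S, hB1S, hBun, hBdis⟩ := DayChoice_parts v0 v1 hSnn hDC
    have hdisj_tf : ∀ s : Fin k, t₀ + 1 ≤ s.val → Disjoint (M tf) (M s) := by
      intro s hsv
      refine hdisj tf s ?_
      intro hEq
      have : s.val = t₀ := by rw [← hEq]
      omega
    have hX0' : ∀ s : Fin k, t₀ + 1 ≤ s.val → Disjoint (X0 ∪ B0) (M s) := fun s hsv =>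
      Finset.disjoint_union_left.mpr ⟨hX0 s (by omega),
        Finset.disjoint_of_subset_left hB0S (hdisj_tf s hsv)⟩
    have hX1' : ∀ s : Fin k, t₀ + 1 ≤ s.val → Disjoint (X1 ∪ B1) (M s) := fun s hsv =>
      Finset.disjoint_union_left.mpr ⟨hX1 s (by omega),
        Finset.disjoint_of_subset_left hB1S (hdisj_tf s hsv)⟩
    obtain ⟨C0, C1, hCun, hCdis, hCday, hCpre⟩ :=
      ih (t₀ + 1) (by omega) (X0 ∪ B0) (X1 ∪ B1) hs' hX0' hX1'
    have hC0sub : C0 ⊆ suffU M (t₀ + 1) := hCun ▸ Finset.subset_union_left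
    have hC1sub : C1 ⊆ suffU M (t₀ + 1) := hCun ▸ Finset.subset_union_right
    have hsuffdisj : Disjoint (suffU M (t₀ + 1)) (M tf) := by
      rw [Finset.disjoint_left]
      intro g hg hgtf
      obtain ⟨s, hsv, hgs⟩ := (mem_suffU M).mp hg
      exact (Finset.disjoint_left.mp (hdisj_tf s hsv)) hgtf hgs
    have hC0tf : Disjoint C0 (M tf) := Finset.disjoint_of_subset_left hC0sub hsuffdisj
    have hC1tf : Disjoint C1 (M tf) := Finset.disjoint_of_subset_left hC1sub hsuffdisj
    refine ⟨B0 ∪ C0, B1 ∪ C1, ?_, ?_, ?_, ?_⟩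
    · -- union
      have : suffU M t₀ = M tf ∪ suffU M (t₀ + 1) := by
        ext g
        simp only [mem_suffU M, Finset.mem_union]
        constructor
        · rintro ⟨s, hsv, hgs⟩
          rcases Nat.eq_or_lt_of_le hsv with hEq | hlt
          · left
            have : s = tf := Fin.ext (by omega)
            rwa [← this]
          · right; exact ⟨s, by omega, hgs⟩
        · rintro (hg | ⟨s, hsv, hgs⟩)
          · exact ⟨tf, by omega, hg⟩
          · exact ⟨s, by omega, hgs⟩
      rw [this, ← hBun, ← hCun]
      ext g; simp only [Finset.mem_union]; tauto
    · -- disjoint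
      rw [Finset.disjoint_union_left]
      constructor
      · rw [Finset.disjoint_union_right]
        exact ⟨hBdis, Finset.disjoint_of_subset_right hC1sub
          (Finset.disjoint_of_subset_left hB0S hsuffdisj.symm)⟩
      · rw [Finset.disjoint_union_right]
        exact ⟨Finset.disjoint_of_subset_right hB1S hC0tf, hCdis⟩
    · -- per-day
      intro t ht
      rcases Nat.eq_or_lt_of_le ht with hEq | hlt
      · have htt : t = tf := Fin.ext (by omega)
        rw [htt]
        have i0 : (B0 ∪ C0) ∩ M tf = B0 := by
          rw [Finset.union_inter_distrib_right, Finset.inter_eq_left.mpr hB0S,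
            (Finset.disjoint_iff_inter_eq_empty.mp hC0tf), Finset.union_empty]
        have i1 : (B1 ∪ C1) ∩ M tf = B1 := by
          rw [Finset.union_inter_distrib_right, Finset.inter_eq_left.mpr hB1S,
            (Finset.disjoint_iff_inter_eq_empty.mp hC1tf), Finset.union_empty]
        rw [i0, i1]; exact hDC
      · have hBt : Disjoint B0 (M t) ∧ Disjoint B1 (M t) :=
          ⟨Finset.disjoint_of_subset_left hB0S (hdisj_tf t (by omega)),
           Finset.disjoint_of_subset_left hB1S (hdisj_tf t (by omega))⟩
        have i0 : (B0 ∪ C0) ∩ M t = C0 ∩ M t := by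
          rw [Finset.union_inter_distrib_right,
            Finset.disjoint_iff_inter_eq_empty.mp hBt.1, Finset.empty_union]
        have i1 : (B1 ∪ C1) ∩ M t = C1 ∩ M t := by
          rw [Finset.union_inter_distrib_right,
            Finset.disjoint_iff_inter_eq_empty.mp hBt.2, Finset.empty_union]
        rw [i0, i1]; exact hCday t (by omega)
    · -- prefixes
      intro t ht
      rcases Nat.eq_or_lt_of_le ht with hEq | hlt
      · -- t = tf : midU t₀ t = M tf
        have htt : t = tf := Fin.ext (by omega)
        rw [htt]
        have hmid : midU M t₀ tf = M tf := by
          ext g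
          simp only [mem_midU M]
          constructor
          · rintro ⟨s, ⟨h1, h2⟩, hgs⟩
            have hseq : s = tf := Fin.ext (by omega)
            rwa [← hseq]
          · intro hg; exact ⟨tf, ⟨by omega, by omega⟩, hg⟩
        have i0 : (B0 ∪ C0) ∩ midU M t₀ tf = B0 := by
          rw [hmid, Finset.union_inter_distrib_right, Finset.inter_eq_left.mpr hB0S,
            Finset.disjoint_iff_inter_eq_empty.mp hC0tf, Finset.union_empty]
        have i1 : (B1 ∪ C1) ∩ midU M t₀ tf = B1 := by
          rw [hmid, Finset.union_inter_distrib_right, Finset.inter_eq_left.mpr hB1S,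
            Finset.disjoint_iff_inter_eq_empty.mp hC1tf, Finset.union_empty]
        rw [i0, i1]
        exact ⟨e0, e1⟩
      · -- t > t₀
        have hmid : midU M t₀ t = M tf ∪ midU M (t₀ + 1) t := by
          ext g
          simp only [mem_midU M, Finset.mem_union]
          constructor
          · rintro ⟨s, ⟨h1, h2⟩, hgs⟩
            rcases Nat.eq_or_lt_of_le h1 with hEq | hlt'
            · left
              have hseq : s = tf := Fin.ext (by omega)
              rwa [← hseq]
            · right; exact ⟨s, ⟨by omega, h2⟩, hgs⟩
          · rintro (hg | ⟨s, ⟨h1, h2⟩, hgs⟩)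
            · exact ⟨tf, ⟨by omega, by omega⟩, hg⟩
            · exact ⟨s, ⟨by omega, h2⟩, hgs⟩
        have hmid_sub : midU M (t₀ + 1) t ⊆ suffU M (t₀ + 1) := by
          intro g hg
          obtain ⟨s, ⟨h1, _⟩, hgs⟩ := (mem_midU M).mp hg
          exact (mem_suffU M).mpr ⟨s, h1, hgs⟩
        have i0 : (B0 ∪ C0) ∩ midU M t₀ t = B0 ∪ (C0 ∩ midU M (t₀ + 1) t) := by
          rw [hmid, Finset.union_inter_distrib_right]
          have p1 : B0 ∩ (M tf ∪ midU M (t₀ + 1) t) = B0 := Finset.inter_eq_left.mpr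
            (hB0S.trans Finset.subset_union_left)
          have p2 : C0 ∩ (M tf ∪ midU M (t₀ + 1) t) = C0 ∩ midU M (t₀ + 1) t := by
            rw [Finset.inter_union_distrib_left,
              Finset.disjoint_iff_inter_eq_empty.mp hC0tf, Finset.empty_union]
          rw [p1, p2]
        have i1 : (B1 ∪ C1) ∩ midU M t₀ t = B1 ∪ (C1 ∩ midU M (t₀ + 1) t) := by
          rw [hmid, Finset.union_inter_distrib_right]
          have p1 : B1 ∩ (M tf ∪ midU M (t₀ + 1) t) = B1 := Finset.inter_eq_left.mpr
            (hB1S.trans Finset.subset_union_left)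
          have p2 : C1 ∩ (M tf ∪ midU M (t₀ + 1) t) = C1 ∩ midU M (t₀ + 1) t := by
            rw [Finset.inter_union_distrib_left,
              Finset.disjoint_iff_inter_eq_empty.mp hC1tf, Finset.empty_union]
          rw [p1, p2]
        rw [i0, i1, ← Finset.union_assoc, ← Finset.union_assoc]
        exact hCpre t (by omega)


lemma fin2_cases (i : Fin 2) : i = 0 ∨ i = 1 := by revert i; decide

/-- Build the `EF1` predicate for a 2-agent allocation from the two nontrivial sides. -/
lemma ef1_of_sides (v : Fin 2 → G → ℝ) (A : Fin 2 → Finset G)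
    (hnn : ∀ i j : Fin 2, ∀ g ∈ A j, 0 ≤ v i g)
    (h0 : EF1side (v 0) (A 0) (A 1)) (h1 : EF1side (v 1) (A 1) (A 0)) :
    EF1 2 v A := by
  intro i j hne
  have hself : ∀ i : Fin 2, A i ≠ ∅ →
      ∃ g ∈ A i, totalVal (v i) ((A i).erase g) ≤ totalVal (v i) (A i) := by
    intro i hne'
    obtain ⟨g, hg⟩ := Finset.nonempty_iff_ne_empty.mpr hne'
    exact ⟨g, hg, tv_erase_le g (hnn i i)⟩
  rcases fin2_cases i with rfl | rfl <;> rcases fin2_cases j with rfl | rfl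
  · exact hself 0 hne
  · exact ef1side_clause h0 (hnn 0 1) hne
  · exact ef1side_clause h1 (hnn 1 0) hne
  · exact hself 1 hne

/-- Pareto optimality for a 2-agent allocation (B0, S \ B0) from the lex-argmax property. -/
lemma po_of_pair (v : Fin 2 → G → ℝ) (S B0 : Finset G) (hB0 : B0 ⊆ S)
    (hpo : ∀ X ⊆ S, totalVal (v 0) B0 ≤ totalVal (v 0) X →
        totalVal (v 1) (S \ B0) ≤ totalVal (v 1) (S \ X) →
        totalVal (v 0) X ≤ totalVal (v 0) B0 ∧
        totalVal (v 1) (S \ X) ≤ totalVal (v 1) (S \ B0))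
    (A : Fin 2 → Finset G) (hA0 : A 0 = B0) (hA1 : A 1 = S \ B0) :
    ParetoOpt 2 v S A := by
  rintro ⟨A', ⟨hdisj', hun'⟩, hweak, i, hstr⟩
  have hA'01 : A' 0 ∪ A' 1 = S := by
    rw [← hun']
    ext g
    simp [Finset.mem_biUnion, Fin.exists_fin_two]
  have hA'0S : A' 0 ⊆ S := hA'01 ▸ Finset.subset_union_left
  have hA'1 : A' 1 = S \ A' 0 := by
    have hd := hdisj' 0 1 (by decide)
    ext g
    simp only [Finset.mem_sdiff]
    constructor
    · intro hg
      refine ⟨hA'01 ▸ Finset.mem_union_right _ hg, ?_⟩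
      exact fun hg0 => (Finset.disjoint_left.mp hd) hg0 hg
    · rintro ⟨hgS, hg0⟩
      rcases Finset.mem_union.mp (hA'01 ▸ hgS : g ∈ A' 0 ∪ A' 1) with h | h
      · exact absurd h hg0
      · exact h
  have hw0 := hweak 0
  have hw1 := hweak 1
  rw [hA0] at hw0
  rw [hA1] at hw1
  rw [hA'1] at hw1
  have := hpo (A' 0) hA'0S hw0 hw1
  rcases fin2_cases i with rfl | rfl
  · rw [hA0] at hstr; linarith [this.1, hstr]
  · rw [hA1, hA'1] at hstr; linarith [this.2, hstr]


end TFD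

open TFD

/-- For every temporal fair division instance with two agents, there is
an allocation `A` of all the goods such that on every day `t` the induced allocation is
both EF1 and Pareto optimal with respect to `M t`, and `A` is EF1 up to each day. -/
theorem two_agents_ef1_po_perDay_ef1_upToEachDay
    {G : Type*} [DecidableEq G] (k : ℕ)
    (M : Fin k → Finset G)
    (hdisj : ∀ t t' : Fin k, t ≠ t' → Disjoint (M t) (M t'))
    (v : Fin 2 → G → ℝ)
    (hv : ∀ i : Fin 2, ∀ g ∈ Finset.univ.biUnion M, 0 ≤ v i g) :
    ∃ A : Fin 2 → Finset G,
      IsAlloc 2 (Finset.univ.biUnion M) A ∧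
      (∀ t : Fin k, EF1 2 v (fun i => A i ∩ M t) ∧
        ParetoOpt 2 v (M t) (fun i => A i ∩ M t)) ∧
      (∀ t : Fin k, EF1 2 v (fun i => A i ∩ upTo M t)) := by
  classical
  set v0 := v 0 with hv0def
  set v1 := v 1 with hv1def
  have hv0 : ∀ g ∈ Finset.univ.biUnion M, 0 ≤ v0 g := hv 0
  have hv1 : ∀ g ∈ Finset.univ.biUnion M, 0 ≤ v1 g := hv 1
  -- survival from the empty state
  have hins : Inside M 0 (∅ : Finset G) :=
    ⟨Finset.empty_subset _, fun s _ => Finset.disjoint_empty_left _⟩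
  have hsurv : Surv v0 v1 M 0 ∅ ∅ := by
    refine (mainInd v0 v1 M hdisj hv0 hv1 k 0 (by omega)).1 ∅ ∅ hins hins ?_ ?_ <;>
      simp [totalVal]
  obtain ⟨C0, C1, hCun, hCdis, hCday, hCpre⟩ :=
    extract v0 v1 M hdisj hv0 hv1 k 0 (by omega) ∅ ∅ hsurv
      (fun s _ => Finset.disjoint_empty_left _) (fun s _ => Finset.disjoint_empty_left _)
  have hCun' : C0 ∪ C1 = Finset.univ.biUnion M := by
    rw [hCun]
    ext g
    simp [suffU]
  set A : Fin 2 → Finset G := fun i => if i = 0 then C0 else C1 with hAdef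
  have hA0 : A 0 = C0 := rfl
  have hA1 : A 1 = C1 := by simp [hAdef]
  have hC0sub : C0 ⊆ Finset.univ.biUnion M := hCun' ▸ Finset.subset_union_left
  have hC1sub : C1 ⊆ Finset.univ.biUnion M := hCun' ▸ Finset.subset_union_right
  have hAsub : ∀ i : Fin 2, A i ⊆ Finset.univ.biUnion M := by
    intro i
    rcases fin2_cases i with rfl | rfl
    · rwa [hA0]
    · rwa [hA1]
  have hMsub : ∀ t : Fin k, M t ⊆ Finset.univ.biUnion M := fun t g hg =>
    Finset.mem_biUnion.mpr ⟨t, Finset.mem_univ _, hg⟩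
  have hnnday : ∀ t : Fin k, dayNonneg v0 v1 (M t) := fun t =>
    ⟨fun g hg => hv0 g (hMsub t hg), fun g hg => hv1 g (hMsub t hg)⟩
  refine ⟨A, ⟨?_, ?_⟩, ?_, ?_⟩
  · -- pairwise disjoint
    intro i j hne
    rcases fin2_cases i with rfl | rfl <;> rcases fin2_cases j with rfl | rfl
    · exact absurd rfl hne
    · rw [hA0, hA1]; exact hCdis
    · rw [hA0, hA1]; exact hCdis.symm
    · exact absurd rfl hne
  · -- union
    rw [← hCun']
    ext g
    simp only [Finset.mem_biUnion, Finset.mem_union, Finset.mem_univ, true_and]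
    constructor
    · rintro ⟨i, hi⟩
      rcases fin2_cases i with rfl | rfl
      · left; rwa [← hA0]
      · right; rwa [← hA1]
    · rintro (h | h)
      · exact ⟨0, by rwa [hA0]⟩
      · exact ⟨1, by rwa [hA1]⟩
  · -- per-day EF1 and PO
    intro t
    have hdc := hCday t (Nat.zero_le _)
    obtain ⟨hB0S, hB1eq, he0, he1, hpo⟩ := DayChoice_day v0 v1 (hnnday t) hdc
    have hcomp0 : (fun i => A i ∩ M t) 0 = C0 ∩ M t := by
      show A 0 ∩ M t = C0 ∩ M t; rw [hA0]
    have hcomp1 : (fun i => A i ∩ M t) 1 = C1 ∩ M t := by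
      show A 1 ∩ M t = C1 ∩ M t; rw [hA1]
    constructor
    · refine ef1_of_sides v (fun i => A i ∩ M t) ?_ ?_ ?_
      · intro i j g hg
        have : g ∈ Finset.univ.biUnion M :=
          hAsub j (Finset.mem_inter.mp hg).1
        exact hv i g this
      · rw [hA0, hA1]; exact he0
      · rw [hA0, hA1]; exact he1
    · rw [hB1eq] at hpo
      exact po_of_pair v (M t) (C0 ∩ M t) hB0S hpo (fun i => A i ∩ M t) hcomp0
        (by rw [hA1, hB1eq])
  · -- prefix EF1
    intro t
    have hup : upTo M t = midU M 0 t := by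
      ext g
      simp only [upTo, midU, Finset.mem_biUnion, Finset.mem_Iic, Finset.mem_filter,
        Finset.mem_univ, true_and]
      constructor
      · rintro ⟨s, hs, hgs⟩
        exact ⟨s, ⟨Nat.zero_le _, Fin.le_def.mp hs⟩, hgs⟩
      · rintro ⟨s, ⟨_, hs⟩, hgs⟩
        exact ⟨s, Fin.le_def.mpr hs, hgs⟩
    have hpre := hCpre t (Nat.zero_le _)
    rw [Finset.empty_union, Finset.empty_union] at hpre
    have hcomp0 : (fun i => A i ∩ upTo M t) 0 = C0 ∩ midU M 0 t := by
      show A 0 ∩ upTo M t = C0 ∩ midU M 0 t; rw [hA0, hup]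
    have hcomp1 : (fun i => A i ∩ upTo M t) 1 = C1 ∩ midU M 0 t := by
      show A 1 ∩ upTo M t = C1 ∩ midU M 0 t; rw [hA1, hup]
    refine ef1_of_sides v (fun i => A i ∩ upTo M t) ?_ ?_ ?_
    · intro i j g hg
      exact hv i g (hAsub j (Finset.mem_inter.mp hg).1)
    · rw [hA0, hA1, hup]; exact hpre.1
    · rw [hA0, hA1, hup]; exact hpre.2
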